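/- arXiv:1807.09344 — 2 statements merged into one kernel-verified Lean document; each statement's English description precedes it below -/
import Mathlib

section
/- Fix positive integers k, ℓ, m and an integer i with 0 ≤ i ≤ ℓ−1. For all complex q, z with |q| < 1, the sum of z^{|S|} q^{Σ_{s∈S} s} over all finite subsets S of the positive integers satisfying b_S(km) = ℓm − i equals ((-zq;q)_{km}/(q;q)_{ℓm-i}) z^{ℓm-i} q^{(ℓm-i)((2k+ℓ)m-i+1)/2}. -/
/-!
Write `N = km` and `n = ℓm - i`. A finite `S ⊆ ℤ_{>0}` splits into its part in `[1, N]`, which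
is arbitrary and contributes `∏_{a ≤ N} (1 + z q^a) = (-zq;q)_N`, and its part above `N`, which
has exactly `n` elements `N + 1 + c` with `C = {c}` an `n`-subset of `ℕ`; this contributes
`z^n q^{n(N+1)} q^{ΣC}`. Removing the minimum `a` of an `(n+1)`-subset of `ℕ` and shifting the
rest down by `a + 1` gives `Σ_C q^{ΣC} = q^{n(n-1)/2} / (q;q)_n` by induction on `n`, each step
contributing a geometric series in `q^{n+1}`.
-/

open Finset

instance Finset.uniqueCardEqZero {α : Type*} : Unique {C : Finset α // C.card = 0} where
  default := ⟨∅, card_empty⟩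
  uniq C := Subtype.ext (card_eq_zero.mp C.2)

theorem prod_mul_pow_eq_pow_card_mul_pow_sum {ι M : Type*} [CommMonoid M] (s : Finset ι)
    (z q : M) (f : ι → ℕ) : ∏ i ∈ s, z * q ^ f i = z ^ s.card * q ^ ∑ i ∈ s, f i := by
  rw [prod_mul_distrib, prod_const, prod_pow_eq_pow_sum]

theorem prod_mul_pow_shift_of_card_eq {M : Type*} [CommMonoid M] (z q : M) (N : ℕ) {n : ℕ}
    (C : {C : Finset ℕ // C.card = n}) :
    ∏ c ∈ C.1, z * q ^ (N + c + 1) = z ^ n * q ^ (n * (N + 1)) * q ^ ∑ c ∈ C.1, c := by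
  have hsum : ∑ c ∈ C.1, (N + c + 1) = n * (N + 1) + ∑ c ∈ C.1, c := by
    rw [sum_add_distrib, sum_add_distrib, sum_const, sum_const, C.2, smul_eq_mul, smul_eq_mul]
    ring
  rw [prod_mul_pow_eq_pow_card_mul_pow_sum, C.2, hsum, pow_add, mul_assoc]

theorem not_mem_map_addLeftEmbedding_succ (a : ℕ) (C : Finset ℕ) :
    a ∉ C.map (addLeftEmbedding (a + 1)) := by
  simp only [mem_map, addLeftEmbedding_apply, not_exists, not_and]
  intros
  omega

def finsetCardSuccEquiv (n : ℕ) :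
    ℕ × {C : Finset ℕ // C.card = n} ≃ {C : Finset ℕ // C.card = n + 1} where
  toFun p := ⟨insert p.1 (p.2.1.map (addLeftEmbedding (p.1 + 1))), by
    rw [card_insert_of_notMem (not_mem_map_addLeftEmbedding_succ _ _), card_map, p.2.2]⟩
  invFun C :=
    have hC : C.1.Nonempty := card_pos.mp (by omega)
    (C.1.min' hC, ⟨(C.1.erase (C.1.min' hC)).image (· - (C.1.min' hC + 1)), by
      rw [card_image_of_injOn, card_erase_of_mem (min'_mem _ _), C.2, Nat.add_sub_cancel]
      intro x hx y hy hxy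
      have := C.1.min'_lt_of_mem_erase_min' hC hx
      have := C.1.min'_lt_of_mem_erase_min' hC hy
      simp only at hxy
      omega⟩)
  left_inv p := by
    obtain ⟨a, C, hC⟩ := p
    have hmin : (insert a (C.map (addLeftEmbedding (a + 1)))).min' (insert_nonempty _ _) = a :=
      le_antisymm (min'_le _ _ (mem_insert_self _ _)) <| le_min' _ _ _ <| by
        simp only [mem_insert, mem_map, addLeftEmbedding_apply]
        rintro x (rfl | ⟨c, -, rfl⟩) <;> omega
    ext1
    · exact hmin
    · ext1
      simp only [hmin]
      rw [erase_insert (not_mem_map_addLeftEmbedding_succ _ _), map_eq_image, image_image]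
      ext x
      simp
  right_inv C := by
    have hC : C.1.Nonempty := card_pos.mp (by omega)
    ext1
    simp only
    rw [map_eq_image, image_image, image_congr (g := id), image_id, insert_erase (min'_mem _ _)]
    intro x hx
    have := C.1.min'_lt_of_mem_erase_min' hC hx
    simp only [Function.comp, id, addLeftEmbedding_apply]
    omega

theorem sum_finsetCardSuccEquiv (n : ℕ) (p : ℕ × {C : Finset ℕ // C.card = n}) :
    ∑ c ∈ (finsetCardSuccEquiv n p : Finset ℕ), c = (n + 1) * p.1 + n + ∑ c ∈ p.2.1, c := by
  obtain ⟨a, C, hC⟩ := p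
  simp only [finsetCardSuccEquiv, Equiv.coe_fn_mk]
  rw [sum_insert (not_mem_map_addLeftEmbedding_succ _ _), sum_map]
  simp_rw [addLeftEmbedding_apply]
  rw [sum_add_distrib, sum_const, hC, smul_eq_mul]
  ring

theorem pow_sum_finsetCardSuccEquiv {M : Type*} [Monoid M] (q : M) (n : ℕ)
    (p : ℕ × {C : Finset ℕ // C.card = n}) :
    q ^ ∑ c ∈ (finsetCardSuccEquiv n p : Finset ℕ), c =
      (q ^ (n + 1)) ^ p.1 * (q ^ n * q ^ ∑ c ∈ p.2.1, c) := by
  rw [sum_finsetCardSuccEquiv, pow_add, pow_add, pow_mul, mul_assoc]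

section PowSum

variable {𝕜 : Type*} [NormedField 𝕜] {q : 𝕜}

theorem norm_pow_lt_one (hq : ‖q‖ < 1) {n : ℕ} (hn : n ≠ 0) : ‖q ^ n‖ < 1 := by
  rw [norm_pow]
  exact pow_lt_one₀ (norm_nonneg q) hq hn

theorem summable_norm_pow_sum_of_card_eq (hq : ‖q‖ < 1) (n : ℕ) :
    Summable fun C : {C : Finset ℕ // C.card = n} => ‖q ^ ∑ c ∈ C.1, c‖ := by
  induction n with
  | zero => exact (hasSum_fintype _).summable
  | succ n ih =>
    rw [← (finsetCardSuccEquiv n).summable_iff]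
    have hrest : Summable fun C : {C : Finset ℕ // C.card = n} => ‖q ^ n * q ^ ∑ c ∈ C.1, c‖ := by
      simpa only [norm_mul] using ih.mul_left ‖q ^ n‖
    simpa only [Function.comp_def, pow_sum_finsetCardSuccEquiv] using
      (summable_norm_geometric_of_norm_lt_one (norm_pow_lt_one hq n.add_one_ne_zero)).mul_norm
        hrest

theorem hasSum_pow_sum_of_card_eq [CompleteSpace 𝕜] (hq : ‖q‖ < 1) (n : ℕ) :
    HasSum (fun C : {C : Finset ℕ // C.card = n} => q ^ ∑ c ∈ C.1, c)
      (q ^ n.choose 2 / ∏ j ∈ range n, (1 - q ^ (j + 1))) := by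
  induction n with
  | zero =>
    convert hasSum_fintype (fun C : {C : Finset ℕ // C.card = 0} => q ^ ∑ c ∈ C.1, c)
    rw [Fintype.sum_unique]
    show _ = q ^ ∑ c ∈ (∅ : Finset ℕ), c
    simp
  | succ n ih =>
    have hgeom := norm_pow_lt_one hq n.add_one_ne_zero
    have hrest : Summable fun C : {C : Finset ℕ // C.card = n} => ‖q ^ n * q ^ ∑ c ∈ C.1, c‖ := by
      simpa only [norm_mul] using (summable_norm_pow_sum_of_card_eq hq n).mul_left ‖q ^ n‖
    have hsummable :=
      summable_mul_of_summable_norm (summable_norm_geometric_of_norm_lt_one hgeom) hrest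
    have hvalue : q ^ (n + 1).choose 2 / ∏ j ∈ range (n + 1), (1 - q ^ (j + 1)) =
        (1 - q ^ (n + 1))⁻¹ * (q ^ n * (q ^ n.choose 2 / ∏ j ∈ range n, (1 - q ^ (j + 1)))) := by
      rw [Nat.choose_succ_succ', Nat.choose_one_right, prod_range_succ, pow_add, div_eq_mul_inv,
        div_eq_mul_inv, mul_inv]
      ring
    have hprod := (hasSum_geometric_of_norm_lt_one hgeom).mul (ih.mul_left (q ^ n)) hsummable
    rw [← (finsetCardSuccEquiv n).hasSum_iff, hvalue]
    simpa only [Function.comp_def, pow_sum_finsetCardSuccEquiv] using hprod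

theorem summable_norm_prod_mul_pow_shift (hq : ‖q‖ < 1) (z : 𝕜) (N n : ℕ) :
    Summable fun C : {C : Finset ℕ // C.card = n} => ‖∏ c ∈ C.1, z * q ^ (N + c + 1)‖ := by
  simpa only [prod_mul_pow_shift_of_card_eq, norm_mul] using
    (summable_norm_pow_sum_of_card_eq hq n).mul_left ‖z ^ n * q ^ (n * (N + 1))‖

theorem hasSum_prod_mul_pow_shift [CompleteSpace 𝕜] (hq : ‖q‖ < 1) (z : 𝕜) (N n : ℕ) :
    HasSum (fun C : {C : Finset ℕ // C.card = n} => ∏ c ∈ C.1, z * q ^ (N + c + 1))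
      (z ^ n * q ^ (n * (N + 1)) * (q ^ n.choose 2 / ∏ j ∈ range n, (1 - q ^ (j + 1)))) := by
  simpa only [prod_mul_pow_shift_of_card_eq] using
    (hasSum_pow_sum_of_card_eq hq n).mul_left (z ^ n * q ^ (n * (N + 1)))

end PowSum

section SumSplit

variable {α β γ : Type*} {p : α → Prop} [DecidablePred p]

theorem card_filter_eq_card_toRight (e : α ≃ β ⊕ γ) (hp : ∀ a, p a ↔ (e a).isRight)
    (S : Finset α) : (S.filter p).card = (e.finsetCongr S).toRight.card := by
  have hmap : (S.filter p).map e.toEmbedding = (e.finsetCongr S).toRight.map .inr := by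
    ext x
    rcases x with b | c <;> simp [hp]
  rw [← card_map e.toEmbedding, hmap, card_map]

def finsetFilterCardEquiv (e : α ≃ β ⊕ γ) (hp : ∀ a, p a ↔ (e a).isRight) (n : ℕ) :
    {S : Finset α // (S.filter p).card = n} ≃ Finset β × {C : Finset γ // C.card = n} where
  toFun S := ((e.finsetCongr S).toLeft,
    ⟨(e.finsetCongr S).toRight, (card_filter_eq_card_toRight e hp S).symm.trans S.2⟩)
  invFun x := ⟨e.finsetCongr.symm (x.1.disjSum x.2), by
    rw [card_filter_eq_card_toRight e hp, Equiv.apply_symm_apply, toRight_disjSum, x.2.2]⟩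
  left_inv S := by
    ext1
    simp only [toLeft_disjSum_toRight, Equiv.symm_apply_apply]
  right_inv x := by
    ext1
    · simp only [Equiv.apply_symm_apply, toLeft_disjSum]
    · ext1
      simp only [Equiv.apply_symm_apply, toRight_disjSum]

theorem prod_finsetFilterCardEquiv_symm {M : Type*} [CommMonoid M] (e : α ≃ β ⊕ γ)
    (hp : ∀ a, p a ↔ (e a).isRight) (n : ℕ) (w : α → M)
    (x : Finset β × {C : Finset γ // C.card = n}) :
    ∏ s ∈ ((finsetFilterCardEquiv e hp n).symm x : Finset α), w s =
      (∏ b ∈ x.1, w (e.symm (.inl b))) * ∏ c ∈ x.2.1, w (e.symm (.inr c)) := by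
  simp [finsetFilterCardEquiv, Equiv.finsetCongr_apply, prod_map, prod_disjSum]

theorem hasSum_prod_of_card_filter_eq {R : Type*} [NormedCommRing R] [CompleteSpace R]
    [Fintype β] (e : α ≃ β ⊕ γ) (hp : ∀ a, p a ↔ (e a).isRight) {n : ℕ} (w : α → R) {σ : R}
    (hσ : HasSum (fun C : {C : Finset γ // C.card = n} => ∏ c ∈ C.1, w (e.symm (.inr c))) σ)
    (hnorm : Summable fun C : {C : Finset γ // C.card = n} => ‖∏ c ∈ C.1, w (e.symm (.inr c))‖) :
    HasSum (fun S : {S : Finset α // (S.filter p).card = n} => ∏ s ∈ S.1, w s)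
      ((∏ b, (1 + w (e.symm (.inl b)))) * σ) := by
  have hleft : HasSum (fun A : Finset β => ∏ b ∈ A, w (e.symm (.inl b)))
      (∏ b, (1 + w (e.symm (.inl b)))) := by
    rw [prod_one_add, powerset_univ]
    exact hasSum_fintype _
  have hsummable := summable_mul_of_summable_norm
    (f := fun A : Finset β => ∏ b ∈ A, w (e.symm (.inl b))) .of_finite hnorm
  rw [← (finsetFilterCardEquiv e hp n).symm.hasSum_iff]
  simpa only [Function.comp_def, prod_finsetFilterCardEquiv_symm] using hleft.mul hσ hsummable

end SumSplit

def pnatSplitEquiv (N : ℕ) : ℕ+ ≃ Fin N ⊕ ℕ :=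
  Equiv.pnatEquivNat.trans (finSumNatEquiv N).symm

theorem lt_iff_isRight_pnatSplitEquiv (N : ℕ) (s : ℕ+) :
    N < (s : ℕ) ↔ (pnatSplitEquiv N s).isRight := by
  have := s.pos
  simp only [pnatSplitEquiv, Equiv.trans_apply, Equiv.pnatEquivNat_apply, PNat.natPred,
    isRight_finSumNatEquiv_symm_apply, decide_eq_true_eq]
  omega

@[simp]
theorem coe_pnatSplitEquiv_symm_inl (N : ℕ) (a : Fin N) :
    ((pnatSplitEquiv N).symm (.inl a) : ℕ) = a + 1 := rfl

@[simp]
theorem coe_pnatSplitEquiv_symm_inr (N c : ℕ) :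
    ((pnatSplitEquiv N).symm (.inr c) : ℕ) = N + c + 1 := rfl

theorem mul_add_succ_div_two (N n : ℕ) :
    n * (2 * N + n + 1) / 2 = n * (N + 1) + n.choose 2 := by
  rw [Nat.choose_two_right, add_comm (n * (N + 1)), ← Nat.add_mul_div_left _ _ two_pos]
  congr 1
  cases n
  · simp
  · simp only [Nat.add_sub_cancel]
    ring

theorem kl_rank_case_one_generating_function_general (k l m i : ℕ)
    (hm : 0 < m) (hi : i < l)
    (q z : ℂ) (hq : ‖q‖ < 1) :
    (∑' S : {S : Finset ℕ+ //
        (S.filter (fun s : ℕ+ => k * m < (s : ℕ))).card = l * m - i},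
      z ^ (S : Finset ℕ+).card * q ^ (∑ s ∈ (S : Finset ℕ+), (s : ℕ))) =
    ((∏ a ∈ Finset.range (k * m), (1 + z * q ^ (a + 1))) /
        (∏ a ∈ Finset.range (l * m - i), (1 - q ^ (a + 1)))) *
      z ^ (l * m - i) * q ^ ((l * m - i) * ((2 * k + l) * m - i + 1) / 2) := by
  have hsum := hasSum_prod_of_card_filter_eq (pnatSplitEquiv (k * m))
    (lt_iff_isRight_pnatSplitEquiv (k * m)) (fun s : ℕ+ => z * q ^ (s : ℕ))
    (by simpa only [coe_pnatSplitEquiv_symm_inr] using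
      hasSum_prod_mul_pow_shift hq z (k * m) (l * m - i))
    (by simpa only [coe_pnatSplitEquiv_symm_inr] using
      summable_norm_prod_mul_pow_shift hq z (k * m) (l * m - i))
  simp only [prod_mul_pow_eq_pow_card_mul_pow_sum, coe_pnatSplitEquiv_symm_inl,
    Fin.prod_univ_eq_prod_range (fun a => 1 + z * q ^ (a + 1))] at hsum
  have hexp : (2 * k + l) * m - i + 1 = 2 * (k * m) + (l * m - i) + 1 := by
    have : i ≤ l * m := hi.le.trans (Nat.le_mul_of_pos_right l hm)
    rw [add_mul, mul_assoc]
    omega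
  rw [hsum.tsum_eq, hexp, mul_add_succ_div_two, pow_add]
  ring

/-- Generating function for `(k,ℓ)`-rank-`m` tilings with `b(km) = ℓm - i`
(`0 ≤ i ≤ ℓ-1`): the sum of `z^|S| q^(Σ_{s∈S} s)` over such finite subsets `S`
of `ℤ_{>0}` is `((-zq;q)_{km}/(q;q)_{ℓm-i}) z^{ℓm-i} q^{(ℓm-i)((2k+ℓ)m-i+1)/2}`. -/
theorem kl_rank_case_one_generating_function (k l m i : ℕ)
    (hk : 0 < k) (hl : 0 < l) (hm : 0 < m) (hi : i < l)
    (q z : ℂ) (hq : ‖q‖ < 1) :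
    (∑' S : {S : Finset ℕ+ //
        (S.filter (fun s : ℕ+ => k * m < (s : ℕ))).card = l * m - i},
      z ^ (S : Finset ℕ+).card * q ^ (∑ s ∈ (S : Finset ℕ+), (s : ℕ))) =
    ((∏ a ∈ Finset.range (k * m), (1 + z * q ^ (a + 1))) /
        (∏ a ∈ Finset.range (l * m - i), (1 - q ^ (a + 1)))) *
      z ^ (l * m - i) * q ^ ((l * m - i) * ((2 * k + l) * m - i + 1) / 2) :=
  kl_rank_case_one_generating_function_general k l m i hm hi q z hq
end

section
/- Fix positive integers k, ℓ, m and an integer j with 0 ≤ j ≤ k−1. For all complex q, z with |q| < 1, the sum of z^{|S|} q^{Σ_{s∈S} s} over all finite subsets S of the positive integers satisfying b_S(km − j) = ℓm − ℓ and b_S(km − j − 1) = ℓm − ℓ + 1 equals ((-zq;q)_{km-j-1}/(q;q)_{ℓm-ℓ}) z^{ℓm-ℓ+1} q^{(ℓm-ℓ+1)((2k+ℓ)m-2j-ℓ)/2}. -/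
/-!
Put `P = km - j - 1` and `L = ℓm - ℓ`. The two counting conditions say exactly that `P + 1 ∈ S`
and that `S` has `L` elements above `P + 1`, while `S ∩ [1, P]` is arbitrary. Recording the upper
`L` elements by their successive gaps `d ∈ ℕ^L` makes the weight factor as
`z^|A| q^(ΣA) · z^(L+1) q^((P+1) + ⋯ + (P+1+L)) · ∏ᵢ q^((L-i) dᵢ)` with `A = S ∩ [1, P]`;
summing over `A` gives `(-zq;q)_P` and the geometric series over the gaps give `1/(q;q)_L`.
-/

open Finset

theorem summable_norm_pi_prod_and_tsum_pi_prod {R β : Type*} [NormedCommRing R] [CompleteSpace R]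
    {n : ℕ} (f : Fin n → β → R)
    (hf : ∀ i, Summable fun b => ‖f i b‖) :
    (Summable fun d : Fin n → β => ‖∏ i, f i (d i)‖) ∧
      ∑' d : Fin n → β, ∏ i, f i (d i) = ∏ i, ∑' b, f i b := by
  induction n with
  | zero => simp [Summable.of_finite]
  | succ n ih =>
    obtain ⟨hsum, htsum⟩ := ih (fun i => f i.succ) (fun i => hf i.succ)
    let e := Fin.consEquiv fun _ : Fin (n + 1) => β
    have he : ∀ p : β × (Fin n → β),
        ∏ i, f i (e p i) = f 0 p.1 * ∏ i : Fin n, f i.succ (p.2 i) := fun p => by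
      simp [e, Fin.prod_univ_succ]
    refine ⟨?_, ?_⟩
    · rw [← e.summable_iff]
      simpa only [Function.comp_def, he] using (hf 0).mul_norm hsum
    · rw [← e.tsum_eq, Fin.prod_univ_succ, ← htsum, tsum_mul_tsum_of_summable_norm (hf 0) hsum]
      simp only [he]

theorem summable_norm_pi_prod_pow_mul_and_tsum {K : Type*} [NormedField K] [CompleteSpace K]
    {q : K} (hq : ‖q‖ < 1) {n : ℕ} (c : Fin n → ℕ) (hc : ∀ i, c i ≠ 0) :
    (Summable fun d : Fin n → ℕ => ‖∏ i, q ^ (c i * d i)‖) ∧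
      ∑' d : Fin n → ℕ, ∏ i, q ^ (c i * d i) = ∏ i, (1 - q ^ c i)⁻¹ := by
  have hqc : ∀ i, ‖q ^ c i‖ < 1 := fun i => by
    rw [norm_pow]; exact pow_lt_one₀ (norm_nonneg q) hq (hc i)
  simp_rw [pow_mul]
  obtain ⟨hsum, htsum⟩ := summable_norm_pi_prod_and_tsum_pi_prod (fun i k => (q ^ c i) ^ k)
    fun i => summable_norm_geometric_of_norm_lt_one (hqc i)
  exact ⟨hsum, htsum.trans <|
    prod_congr rfl fun i _ => (hasSum_geometric_of_norm_lt_one (hqc i)).tsum_eq⟩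

theorem prod_fin_sub_eq_prod_range_succ {M : Type*} [CommMonoid M] (f : ℕ → M) (n : ℕ) :
    ∏ i : Fin n, f (n - i) = ∏ a ∈ range n, f (a + 1) := by
  rw [← Fin.prod_univ_eq_prod_range, ← Equiv.prod_comp Fin.revPerm]
  refine prod_congr rfl fun i _ => ?_
  rw [Fin.revPerm_apply, Fin.val_rev]
  congr 1
  omega

theorem prod_range_one_add_mul_pow_succ {R : Type*} [CommSemiring R] (z q : R) (n : ℕ) :
    ∏ a ∈ range n, (1 + z * q ^ (a + 1)) =
      ∑ A : Finset (Fin n), z ^ A.card * q ^ ∑ a ∈ A, ((a : ℕ) + 1) := by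
  rw [← Fin.prod_univ_eq_prod_range, prod_one_add, powerset_univ]
  refine sum_congr rfl fun A _ => ?_
  rw [prod_mul_distrib, prod_const, prod_pow_eq_pow_sum]

/-- The `L`-element set `{b₀ < b₁ < ⋯}` of integers above `M` with `b₀ = M + 1 + d 0` and
`bᵢ₊₁ = bᵢ + 1 + d (i + 1)`. -/
def gapSet (M : ℕ) : (L : ℕ) → (Fin L → ℕ) → Finset ℕ+
  | 0, _ => ∅
  | L + 1, d => insert (M + d 0).succPNat (gapSet (M + d 0 + 1) L (Fin.tail d))

theorem lt_of_mem_gapSet {M L : ℕ} {d : Fin L → ℕ} {b : ℕ+} (hb : b ∈ gapSet M L d) :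
    M < b := by
  induction L generalizing M with
  | zero => simp [gapSet] at hb
  | succ L ih =>
    rcases mem_insert.mp hb with rfl | hb
    · simp
    · have := ih hb; omega

theorem head_notMem_gapSet_tail (M L : ℕ) (d : Fin (L + 1) → ℕ) :
    (M + d 0).succPNat ∉ gapSet (M + d 0 + 1) L (Fin.tail d) := fun h => by
  simpa using lt_of_mem_gapSet h

theorem card_gapSet (M L : ℕ) (d : Fin L → ℕ) : (gapSet M L d).card = L := by
  induction L generalizing M with
  | zero => rfl
  | succ L ih => rw [gapSet, card_insert_of_notMem (head_notMem_gapSet_tail M L d), ih]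

theorem sum_gapSet (M L : ℕ) (d : Fin L → ℕ) :
    ∑ b ∈ gapSet M L d, (b : ℕ) =
      ∑ i ∈ range L, (M + 1 + i) + ∑ i : Fin L, (L - i) * d i := by
  induction L generalizing M with
  | zero => rfl
  | succ L ih =>
    rw [gapSet, sum_insert (head_notMem_gapSet_tail M L d), ih, Nat.succPNat_coe,
      Fin.sum_univ_succ, sum_range_succ']
    have hshift : ∀ i, M + d 0 + 1 + 1 + i = M + 1 + (i + 1) + d 0 := fun i => by omega
    simp only [Fin.tail, Fin.val_zero, Fin.val_succ, hshift, sum_add_distrib, sum_const,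
      card_range, smul_eq_mul, Nat.add_sub_add_right, Nat.sub_zero, Nat.succ_eq_add_one]
    ring

theorem le_of_mem_gapSet_succ {M L : ℕ} {d : Fin (L + 1) → ℕ} {b : ℕ+}
    (hb : b ∈ gapSet M (L + 1) d) : M + d 0 + 1 ≤ b := by
  rcases mem_insert.mp hb with rfl | hb
  · simp
  · exact (lt_of_mem_gapSet hb).le

theorem gapSet_injective (M L : ℕ) : Function.Injective (gapSet M L) := by
  induction L generalizing M with
  | zero => exact fun d d' _ => Subsingleton.elim d d'
  | succ L ih =>
    intro d d' h
    have hhead : ∀ {e e' : Fin (L + 1) → ℕ}, gapSet M (L + 1) e = gapSet M (L + 1) e' →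
        e' 0 ≤ e 0 := fun {e e'} h => by
      have hmem : (M + e 0).succPNat ∈ gapSet M (L + 1) e' := h ▸ mem_insert_self _ _
      have := le_of_mem_gapSet_succ hmem
      simp only [Nat.succPNat_coe] at this
      omega
    have h0 : d 0 = d' 0 := le_antisymm (hhead h.symm) (hhead h)
    have htail : Fin.tail d = Fin.tail d' := by
      have := congrArg (·.erase (M + d 0).succPNat) h
      simp only [gapSet] at this
      rw [erase_insert (head_notMem_gapSet_tail M L d), h0,
        erase_insert (head_notMem_gapSet_tail M L d')] at this
      exact ih _ this
    rw [← Fin.cons_self_tail d, ← Fin.cons_self_tail d', h0, htail]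

theorem exists_gapSet_eq {M L : ℕ} {B : Finset ℕ+} (hcard : B.card = L)
    (hlt : ∀ b ∈ B, M < b) : ∃ d, gapSet M L d = B := by
  induction L generalizing M B with
  | zero => exact ⟨Fin.elim0, by simp [gapSet, card_eq_zero.mp hcard]⟩
  | succ L ih =>
    have hne : B.Nonempty := card_pos.mp (by omega)
    set x := B.min' hne
    have hx : x ∈ B := min'_mem B hne
    obtain ⟨d, hd⟩ := ih (M := x) (B := B.erase x) (by rw [card_erase_of_mem hx, hcard]; rfl)
      fun b hb => PNat.coe_lt_coe _ _ |>.mpr (min'_lt_of_mem_erase_min' B hne hb)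
    have hMx : M + ((x : ℕ) - M - 1) + 1 = x := by have := hlt x hx; omega
    refine ⟨Fin.cons ((x : ℕ) - M - 1) d, ?_⟩
    have hsucc : (M + ((x : ℕ) - M - 1)).succPNat = x :=
      PNat.coe_injective (by rw [Nat.succPNat_coe, Nat.succ_eq_add_one, hMx])
    rw [gapSet, Fin.cons_zero, Fin.tail_cons, hsucc, hMx, hd, insert_erase hx]

def finSuccPNat (P : ℕ) : Fin P ↪ ℕ+ :=
  Fin.valEmbedding.trans ⟨Nat.succPNat, Nat.succPNat_injective⟩

/-- The set `(A + 1) ∪ {P + 1} ∪ gapSet (P + 1) L d`; every tiling of the second case arises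
uniquely this way (`caseTwoEquiv`). -/
def caseTwoSet (P L : ℕ) (A : Finset (Fin P)) (d : Fin L → ℕ) : Finset ℕ+ :=
  A.map (finSuccPNat P) ∪ insert P.succPNat (gapSet (P + 1) L d)

section CaseTwoSet

variable {P L : ℕ} (A : Finset (Fin P)) (d : Fin L → ℕ)

theorem exists_finSuccPNat_eq {s : ℕ+} (hs : (s : ℕ) ≤ P) : ∃ a, finSuccPNat P a = s := by
  have := s.pos
  exact ⟨⟨s - 1, by omega⟩, PNat.coe_injective (by simp [finSuccPNat]; omega)⟩

theorem le_of_mem_map_finSuccPNat {s : ℕ+} (hs : s ∈ A.map (finSuccPNat P)) :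
    (s : ℕ) ≤ P := by
  obtain ⟨a, -, rfl⟩ := mem_map.mp hs
  simp [finSuccPNat]

theorem succPNat_notMem_gapSet_succ : P.succPNat ∉ gapSet (P + 1) L d := fun h => by
  simpa using lt_of_mem_gapSet h

theorem disjoint_map_finSuccPNat_insert :
    Disjoint (A.map (finSuccPNat P)) (insert P.succPNat (gapSet (P + 1) L d)) := by
  refine disjoint_left.mpr fun s hs hs' => ?_
  have := le_of_mem_map_finSuccPNat A hs
  rcases mem_insert.mp hs' with rfl | hs'
  · simp at this
  · have := lt_of_mem_gapSet hs'; omega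

theorem filter_le_caseTwoSet :
    (caseTwoSet P L A d).filter (fun s : ℕ+ => (s : ℕ) ≤ P) = A.map (finSuccPNat P) := by
  rw [caseTwoSet, filter_union, filter_true_of_mem fun s => le_of_mem_map_finSuccPNat A,
    filter_insert, if_neg (by simp), filter_false_of_mem fun s hs => by
      have := lt_of_mem_gapSet hs; omega, union_empty]

theorem filter_gt_succ_caseTwoSet :
    (caseTwoSet P L A d).filter (fun s : ℕ+ => P + 1 < (s : ℕ)) = gapSet (P + 1) L d := by
  rw [caseTwoSet, filter_union, filter_false_of_mem fun s hs => by
      have := le_of_mem_map_finSuccPNat A hs; omega,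
    filter_insert, if_neg (by simp), filter_true_of_mem fun s => lt_of_mem_gapSet, empty_union]

theorem filter_gt_caseTwoSet :
    (caseTwoSet P L A d).filter (fun s : ℕ+ => P < (s : ℕ)) =
      insert P.succPNat (gapSet (P + 1) L d) := by
  rw [caseTwoSet, filter_union, filter_false_of_mem fun s hs => by
      have := le_of_mem_map_finSuccPNat A hs; omega,
    filter_insert, if_pos (by simp), filter_true_of_mem fun s hs => by
      have := lt_of_mem_gapSet hs; omega, empty_union]

theorem card_caseTwoSet : (caseTwoSet P L A d).card = A.card + (L + 1) := by
  rw [caseTwoSet, card_union_of_disjoint (disjoint_map_finSuccPNat_insert A d), card_map,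
    card_insert_of_notMem (succPNat_notMem_gapSet_succ d), card_gapSet]

theorem sum_caseTwoSet :
    ∑ s ∈ caseTwoSet P L A d, (s : ℕ) = ∑ a ∈ A, ((a : ℕ) + 1) +
      ∑ i ∈ range (L + 1), (P + 1 + i) + ∑ i : Fin L, (L - i) * d i := by
  rw [caseTwoSet, sum_union (disjoint_map_finSuccPNat_insert A d), sum_map,
    sum_insert (succPNat_notMem_gapSet_succ d), sum_gapSet, sum_range_succ']
  simp only [finSuccPNat, Function.Embedding.trans_apply, Fin.valEmbedding_apply,
    Function.Embedding.coeFn_mk, Nat.succPNat_coe, Nat.succ_eq_add_one]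
  ring_nf

end CaseTwoSet

theorem caseTwoSet_injective (P L : ℕ) :
    Function.Injective fun x : Finset (Fin P) × (Fin L → ℕ) => caseTwoSet P L x.1 x.2 := by
  rintro ⟨A, d⟩ ⟨A', d'⟩ h
  dsimp only at h
  have hA : A = A' := map_injective (finSuccPNat P) <| by
    rw [← filter_le_caseTwoSet A d, h, filter_le_caseTwoSet]
  have hd : d = d' := gapSet_injective (P + 1) L <| by
    rw [← filter_gt_succ_caseTwoSet A d, h, filter_gt_succ_caseTwoSet]
  rw [hA, hd]

theorem exists_caseTwoSet_eq {P L : ℕ} {S : Finset ℕ+}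
    (hhigh : (S.filter fun s : ℕ+ => P + 1 < (s : ℕ)).card = L)
    (hmid : (S.filter fun s : ℕ+ => P < (s : ℕ)).card = L + 1) :
    ∃ A d, caseTwoSet P L A d = S := by
  obtain ⟨d, hd⟩ := exists_gapSet_eq hhigh fun s hs => (mem_filter.mp hs).2
  have hP : P.succPNat ∈ S := by
    obtain ⟨s, hs, hs'⟩ := exists_mem_notMem_of_card_lt_card
      (s := S.filter fun s : ℕ+ => P + 1 < (s : ℕ))
      (t := S.filter fun s : ℕ+ => P < (s : ℕ))
      (by omega)
    rw [mem_filter] at hs hs'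
    have hs_eq : (s : ℕ) = P + 1 := by have := mt (And.intro hs.1) hs'; omega
    exact (PNat.coe_injective (hs_eq.trans (Nat.succPNat_coe P).symm)) ▸ hs.1
  refine ⟨univ.filter fun a => finSuccPNat P a ∈ S, d, ?_⟩
  ext s
  simp only [caseTwoSet, mem_union, mem_map, mem_filter, mem_univ, true_and, mem_insert, hd]
  refine ⟨?_, fun hs => ?_⟩
  · rintro (⟨a, ha, rfl⟩ | rfl | ⟨hs, -⟩) <;> assumption
  rcases lt_trichotomy (s : ℕ) (P + 1) with hlt | heq | hgt
  · obtain ⟨a, rfl⟩ := exists_finSuccPNat_eq (Nat.le_of_lt_succ hlt)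
    exact Or.inl ⟨a, hs, rfl⟩
  · exact Or.inr (Or.inl (PNat.coe_injective heq))
  · exact Or.inr (Or.inr ⟨hs, hgt⟩)

noncomputable def caseTwoEquiv (P L : ℕ) :
    Finset (Fin P) × (Fin L → ℕ) ≃ {S : Finset ℕ+ //
      (S.filter fun s : ℕ+ => P + 1 < (s : ℕ)).card = L ∧
      (S.filter fun s : ℕ+ => P < (s : ℕ)).card = L + 1} :=
  Equiv.ofBijective
    (fun x => ⟨caseTwoSet P L x.1 x.2, by
      rw [filter_gt_succ_caseTwoSet, filter_gt_caseTwoSet,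
        card_insert_of_notMem (succPNat_notMem_gapSet_succ _), card_gapSet]
      exact ⟨rfl, rfl⟩⟩)
    ⟨fun _ _ h => caseTwoSet_injective P L (congrArg Subtype.val h), fun ⟨_, hhigh, hmid⟩ =>
      let ⟨A, d, h⟩ := exists_caseTwoSet_eq hhigh hmid
      ⟨(A, d), Subtype.ext h⟩⟩

theorem coe_caseTwoEquiv (P L : ℕ) (x : Finset (Fin P) × (Fin L → ℕ)) :
    (caseTwoEquiv P L x : Finset ℕ+) = caseTwoSet P L x.1 x.2 :=
  rfl

theorem tsum_caseTwo {K : Type*} [NormedField K] [CompleteSpace K] (P L : ℕ) {q : K} (z : K)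
    (hq : ‖q‖ < 1) :
    ∑' S : {S : Finset ℕ+ //
        (S.filter fun s : ℕ+ => P + 1 < (s : ℕ)).card = L ∧
        (S.filter fun s : ℕ+ => P < (s : ℕ)).card = L + 1},
      z ^ (S : Finset ℕ+).card * q ^ ∑ s ∈ (S : Finset ℕ+), (s : ℕ) =
    (∏ a ∈ range P, (1 + z * q ^ (a + 1))) / (∏ a ∈ range L, (1 - q ^ (a + 1))) *
      z ^ (L + 1) * q ^ ∑ i ∈ range (L + 1), (P + 1 + i) := by
  have hweight : ∀ x : Finset (Fin P) × (Fin L → ℕ),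
      z ^ (caseTwoSet P L x.1 x.2).card * q ^ ∑ s ∈ caseTwoSet P L x.1 x.2, (s : ℕ) =
        z ^ x.1.card * q ^ (∑ a ∈ x.1, ((a : ℕ) + 1)) * (∏ i : Fin L, q ^ ((L - i) * x.2 i)) *
          (z ^ (L + 1) * q ^ ∑ i ∈ range (L + 1), (P + 1 + i)) := fun x => by
    rw [card_caseTwoSet, sum_caseTwoSet, prod_pow_eq_pow_sum, pow_add, pow_add, pow_add]
    ring
  obtain ⟨hsum, htsum⟩ := summable_norm_pi_prod_pow_mul_and_tsum hq (fun i : Fin L => L - i)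
    fun i => by omega
  rw [← (caseTwoEquiv P L).tsum_eq]
  simp only [coe_caseTwoEquiv, hweight]
  rw [tsum_mul_right, ← tsum_mul_tsum_of_summable_norm
      (f := fun A : Finset (Fin P) => z ^ A.card * q ^ ∑ a ∈ A, ((a : ℕ) + 1))
      Summable.of_finite hsum,
    tsum_fintype, htsum, ← prod_range_one_add_mul_pow_succ,
    prod_fin_sub_eq_prod_range_succ (fun a => (1 - q ^ a)⁻¹),
    prod_inv_distrib, div_eq_mul_inv]
  ring

theorem sum_range_succ_add_mul_two (M n : ℕ) :
    (∑ i ∈ range (n + 1), (M + i)) * 2 = (n + 1) * (2 * M + n) := by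
  rw [sum_add_distrib, add_mul, sum_range_id_mul_two, sum_const, card_range, smul_eq_mul,
    Nat.add_sub_cancel]
  ring

theorem kl_rank_case_two_generating_function_general (k l m j : ℕ)
    (hm : 0 < m) (hj : j < k)
    (q z : ℂ) (hq : ‖q‖ < 1) :
    (∑' S : {S : Finset ℕ+ //
        (S.filter (fun s : ℕ+ => k * m - j < (s : ℕ))).card = l * m - l ∧
        (S.filter (fun s : ℕ+ => k * m - j - 1 < (s : ℕ))).card = l * m - l + 1},
      z ^ (S : Finset ℕ+).card * q ^ (∑ s ∈ (S : Finset ℕ+), (s : ℕ))) =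
    ((∏ a ∈ Finset.range (k * m - j - 1), (1 + z * q ^ (a + 1))) /
        (∏ a ∈ Finset.range (l * m - l), (1 - q ^ (a + 1)))) *
      z ^ (l * m - l + 1) * q ^ ((l * m - l + 1) * ((2 * k + l) * m - 2 * j - l) / 2) := by
  have hkm : k ≤ k * m := Nat.le_mul_of_pos_right k hm
  have hlm : l ≤ l * m := Nat.le_mul_of_pos_right l hm
  obtain ⟨P, hP⟩ : ∃ P, k * m - j = P + 1 := ⟨k * m - j - 1, by omega⟩
  set L := l * m - l
  have hexp : (2 * k + l) * m - 2 * j - l = 2 * (P + 1) + L := by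
    have : (2 * k + l) * m = 2 * (k * m) + l * m := by ring
    omega
  rw [hP, Nat.add_sub_cancel, tsum_caseTwo P L z hq, hexp, ← sum_range_succ_add_mul_two,
    Nat.mul_div_cancel _ two_pos]

/-- Generating function for `(k,ℓ)`-rank-`m` tilings with `b(km-j) = ℓm - ℓ`
and `b(km-j-1) = ℓm - ℓ + 1` (`0 ≤ j ≤ k-1`): the sum of `z^|S| q^(Σ_{s∈S} s)`
over such finite subsets `S` of `ℤ_{>0}` is
`((-zq;q)_{km-j-1}/(q;q)_{ℓm-ℓ}) z^{ℓm-ℓ+1} q^{(ℓm-ℓ+1)((2k+ℓ)m-2j-ℓ)/2}`. -/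
theorem kl_rank_case_two_generating_function (k l m j : ℕ)
    (hk : 0 < k) (hl : 0 < l) (hm : 0 < m) (hj : j < k)
    (q z : ℂ) (hq : ‖q‖ < 1) :
    (∑' S : {S : Finset ℕ+ //
        (S.filter (fun s : ℕ+ => k * m - j < (s : ℕ))).card = l * m - l ∧
        (S.filter (fun s : ℕ+ => k * m - j - 1 < (s : ℕ))).card = l * m - l + 1},
      z ^ (S : Finset ℕ+).card * q ^ (∑ s ∈ (S : Finset ℕ+), (s : ℕ))) =
    ((∏ a ∈ Finset.range (k * m - j - 1), (1 + z * q ^ (a + 1))) /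
        (∏ a ∈ Finset.range (l * m - l), (1 - q ^ (a + 1)))) *
      z ^ (l * m - l + 1) * q ^ ((l * m - l + 1) * ((2 * k + l) * m - 2 * j - l) / 2) :=
  kl_rank_case_two_generating_function_general k l m j hm hj q z hq
end
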